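/- arXiv:2307.02221 — 2 statements merged into one kernel-verified Lean document; each statement's English description precedes it below -/
import Mathlib

section
/- Let (X,d) be a metric space, f any unbounded modulus function, (A_k) a sequence in CL(X) and A ∈ CL(X). If (A_k) is Wijsman f-statistically convergent to A, then (A_k) is Wijsman statistically convergent to A. -/
open Filter Metric Set

/-- `f : ℝ → ℝ` is an (unbounded) modulus function (considered on `[0,∞)`):
`f x = 0 ↔ x = 0`, subadditive, increasing, continuous from the right at `0`,
and unbounded. -/
def IsModulus (f : ℝ → ℝ) : Prop :=
  (∀ x ∈ Set.Ici (0:ℝ), 0 ≤ f x) ∧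
  (∀ x ∈ Set.Ici (0:ℝ), (f x = 0 ↔ x = 0)) ∧
  (∀ x ∈ Set.Ici (0:ℝ), ∀ y ∈ Set.Ici (0:ℝ), f (x + y) ≤ f x + f y) ∧
  MonotoneOn f (Set.Ici (0:ℝ)) ∧
  ContinuousWithinAt f (Set.Ici (0:ℝ)) 0 ∧
  (∀ M : ℝ, ∃ x ∈ Set.Ici (0:ℝ), M < f x)

/-- `φ(ε) = limsup_n f(nε)/f(n)`. -/
noncomputable def modPhi (f : ℝ → ℝ) (ε : ℝ) : ℝ :=
  Filter.limsup (fun n : ℕ => f ((n : ℝ) * ε) / f (n : ℝ)) Filter.atTop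

/-- A modulus function is compatible if `φ(ε) → 0` as `ε → 0⁺`. -/
def Compatible (f : ℝ → ℝ) : Prop :=
  Filter.Tendsto (modPhi f) (nhdsWithin 0 (Set.Ioi 0)) (nhds 0)

/-- Wijsman statistical convergence of a sequence of subsets of a metric space. -/
def WijsmanStatConv {X : Type*} [MetricSpace X] (A : ℕ → Set X) (B : Set X) : Prop :=
  ∀ x : X, ∀ ε > (0:ℝ),
    Filter.Tendsto (fun n : ℕ =>
      (((Finset.range n).filter
        (fun j => ε < |infDist x (A j) - infDist x B|)).card : ℝ) / (n : ℝ))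
      Filter.atTop (nhds 0)

/-- Wijsman `f`-statistical convergence of a sequence of subsets of a metric space. -/
def WijsmanFStatConv {X : Type*} [MetricSpace X] (f : ℝ → ℝ) (A : ℕ → Set X)
    (B : Set X) : Prop :=
  ∀ x : X, ∀ ε > (0:ℝ),
    Filter.Tendsto (fun n : ℕ =>
      f ((((Finset.range n).filter
        (fun j => ε < |infDist x (A j) - infDist x B|)).card : ℝ)) / f (n : ℝ))
      Filter.atTop (nhds 0)

/-- A real sequence is `f`-strong Cesàro convergent to `L`. -/
def FStrongCesaro (f : ℝ → ℝ) (x : ℕ → ℝ) (L : ℝ) : Prop :=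
  Filter.Tendsto (fun n : ℕ =>
    f (∑ j ∈ Finset.range n, |x j - L|) / f (n : ℝ)) Filter.atTop (nhds 0)

/-- Wijsman `f`-strong Cesàro convergence. -/
def WijsmanFStrongCesaro {X : Type*} [MetricSpace X] (f : ℝ → ℝ) (A : ℕ → Set X)
    (B : Set X) : Prop :=
  ∀ x : X, FStrongCesaro f (fun j => infDist x (A j)) (infDist x B)

/-- Wijsman strong Cesàro convergence (the case `f = id`). -/
def WijsmanStrongCesaro {X : Type*} [MetricSpace X] (A : ℕ → Set X) (B : Set X) : Prop :=
  ∀ x : X,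
    Filter.Tendsto (fun n : ℕ =>
      (∑ j ∈ Finset.range n, |infDist x (A j) - infDist x B|) / (n : ℝ))
      Filter.atTop (nhds 0)

/-- A real sequence is uniformly integrable. -/
def UnifIntegrable (x : ℕ → ℝ) : Prop :=
  Filter.Tendsto (fun c : ℝ =>
    ⨆ n : ℕ, (∑ j ∈ Finset.range n, if c ≤ |x j| then |x j| else 0) / (n : ℝ))
    Filter.atTop (nhds 0)

/-- Wijsman uniform integrability. -/
def WijsmanUnifIntegrable {X : Type*} [MetricSpace X] (A : ℕ → Set X) : Prop :=
  ∀ x : X, UnifIntegrable (fun j => infDist x (A j))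

/-- A lacunary sequence: strictly increasing, starting at `0`,
with gaps `h_r = k_{r+1} - k_r → ∞`. -/
def IsLacunary (k : ℕ → ℕ) : Prop :=
  k 0 = 0 ∧ StrictMono k ∧
    Filter.Tendsto (fun r : ℕ => k (r + 1) - k r) Filter.atTop Filter.atTop

/-- The gaps `h_r` of a lacunary sequence. -/
def lacH (k : ℕ → ℕ) (r : ℕ) : ℕ := k (r + 1) - k r

/-- The blocks `I_r = (k_r, k_{r+1}]` of a lacunary sequence. -/
def lacI (k : ℕ → ℕ) (r : ℕ) : Finset ℕ := Finset.Ioc (k r) (k (r + 1))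

/-- `φ_θ(ε) = limsup_t f(h_t ε)/f(h_t)`. -/
noncomputable def modPhiTheta (f : ℝ → ℝ) (k : ℕ → ℕ) (ε : ℝ) : ℝ :=
  Filter.limsup (fun t : ℕ => f ((lacH k t : ℝ) * ε) / f ((lacH k t : ℝ))) Filter.atTop

/-- `f` is `θ`-compatible if `φ_θ(ε) → 0` as `ε → 0⁺`. -/
def ThetaCompatible (f : ℝ → ℝ) (k : ℕ → ℕ) : Prop :=
  Filter.Tendsto (modPhiTheta f k) (nhdsWithin 0 (Set.Ioi 0)) (nhds 0)

/-- Wijsman `θ`-lacunary statistical convergence. -/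
def WijsmanLacStatConv {X : Type*} [MetricSpace X] (k : ℕ → ℕ) (A : ℕ → Set X)
    (B : Set X) : Prop :=
  ∀ x : X, ∀ ε > (0:ℝ),
    Filter.Tendsto (fun r : ℕ =>
      (((lacI k r).filter
        (fun j => ε < |infDist x (A j) - infDist x B|)).card : ℝ) / (lacH k r : ℝ))
      Filter.atTop (nhds 0)

/-- Wijsman `θ`-lacunary `f`-statistical convergence. -/
def WijsmanLacFStatConv {X : Type*} [MetricSpace X] (f : ℝ → ℝ) (k : ℕ → ℕ)
    (A : ℕ → Set X) (B : Set X) : Prop :=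
  ∀ x : X, ∀ ε > (0:ℝ),
    Filter.Tendsto (fun r : ℕ =>
      f ((((lacI k r).filter
        (fun j => ε < |infDist x (A j) - infDist x B|)).card : ℝ)) / f ((lacH k r : ℝ)))
      Filter.atTop (nhds 0)

/-- Wijsman `θ`-lacunary `f`-strong Cesàro convergence. -/
def WijsmanLacFStrongCesaro {X : Type*} [MetricSpace X] (f : ℝ → ℝ) (k : ℕ → ℕ)
    (A : ℕ → Set X) (B : Set X) : Prop :=
  ∀ x : X,
    Filter.Tendsto (fun r : ℕ =>
      f (∑ j ∈ lacI k r, |infDist x (A j) - infDist x B|) / f ((lacH k r : ℝ)))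
      Filter.atTop (nhds 0)

/-- Wijsman `θ`-lacunary strong Cesàro convergence (the case `f = id`). -/
def WijsmanLacStrongCesaro {X : Type*} [MetricSpace X] (k : ℕ → ℕ)
    (A : ℕ → Set X) (B : Set X) : Prop :=
  ∀ x : X,
    Filter.Tendsto (fun r : ℕ =>
      (∑ j ∈ lacI k r, |infDist x (A j) - infDist x B|) / (lacH k r : ℝ))
      Filter.atTop (nhds 0)

/-- A real sequence is `θ`-lacunary uniformly integrable. -/
def LacUnifIntegrable (k : ℕ → ℕ) (x : ℕ → ℝ) : Prop :=
  Filter.Tendsto (fun M : ℝ =>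
    ⨆ t : ℕ, (∑ j ∈ lacI k t, if M ≤ |x j| then |x j| else 0) / (lacH k t : ℝ))
    Filter.atTop (nhds 0)

/-- Wijsman `θ`-lacunary uniform integrability. -/
def WijsmanLacUnifIntegrable {X : Type*} [MetricSpace X] (k : ℕ → ℕ)
    (A : ℕ → Set X) : Prop :=
  ∀ x : X, LacUnifIntegrable k (fun j => infDist x (A j))


/-!
If a fraction `c / n` of the first `n` indices is at least `δ`, then `n ≤ m c` with
any natural `m > 1/δ`, and monotonicity and subadditivity of `f` give `f n ≤ f (m c) ≤ m f c`, so
`f c / f n ≥ 1/m`. Hence `f c / f n → 0` forces `c / n → 0`.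
-/

namespace IsModulus

variable {f : ℝ → ℝ}

theorem map_zero (hf : IsModulus f) : f 0 = 0 :=
  (hf.2.1 0 Set.self_mem_Ici).2 rfl

theorem pos_of_pos (hf : IsModulus f) {x : ℝ} (hx : 0 < x) : 0 < f x :=
  (hf.1 x hx.le).lt_of_ne' fun h => hx.ne' ((hf.2.1 x hx.le).1 h)

theorem map_natCast_mul_le (hf : IsModulus f) (m : ℕ) {a : ℝ} (ha : 0 ≤ a) :
    f (m * a) ≤ m * f a := by
  induction m with
  | zero => simp [hf.map_zero]
  | succ k ih =>
    calc f ((k + 1 : ℕ) * a) = f (k * a + a) := by push_cast; ring_nf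
      _ ≤ f (k * a) + f a := hf.2.2.1 _ (mul_nonneg k.cast_nonneg ha) _ ha
      _ ≤ (k + 1 : ℕ) * f a := by push_cast; linarith

theorem inv_natCast_le_div (hf : IsModulus f) {m : ℕ} (hm : 0 < m) {a b : ℝ}
    (ha : 0 ≤ a) (hb : 0 < b) (hba : b ≤ m * a) : (m : ℝ)⁻¹ ≤ f a / f b := by
  have hfb : f b ≤ m * f a :=
    (hf.2.2.2.1 hb.le (hb.le.trans hba) hba).trans (hf.map_natCast_mul_le m ha)
  rw [inv_eq_one_div, div_le_div_iff₀ (by positivity) (hf.pos_of_pos hb)]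
  linarith

theorem tendsto_div_of_tendsto_map_div (hf : IsModulus f) {ι : Type*} {l : Filter ι}
    {c d : ι → ℝ} (hc : ∀ i, 0 ≤ c i) (hd : ∀ᶠ i in l, 0 < d i)
    (h : Tendsto (fun i => f (c i) / f (d i)) l (nhds 0)) :
    Tendsto (fun i => c i / d i) l (nhds 0) := by
  refine tendsto_order.2 ⟨fun a ha => ?_, fun δ hδ => ?_⟩
  · filter_upwards [hd] with i hi
    exact ha.trans_le (div_nonneg (hc i) hi.le)
  · obtain ⟨m, hm⟩ := exists_nat_gt δ⁻¹
    have hm0 : 0 < m := by exact_mod_cast (inv_pos.2 hδ).trans hm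
    filter_upwards [hd, (tendsto_order.1 h).2 _ (by positivity : (0 : ℝ) < (m : ℝ)⁻¹)]
      with i hdi hfi
    by_contra! hδc
    have hdm : d i ≤ m * c i :=
      calc d i = δ⁻¹ * (δ * d i) := by field_simp
        _ ≤ δ⁻¹ * c i := by gcongr; exact (le_div_iff₀ hdi).1 hδc
        _ ≤ m * c i := by gcongr; exact hc i
    exact (hf.inv_natCast_le_div hm0 (hc i) hdi hdm).not_gt hfi

end IsModulus

theorem wijsman_fstat_imp_stat_general {X : Type*} [MetricSpace X]
    (f : ℝ → ℝ) (hf : IsModulus f)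
    (A : ℕ → Set X) (B : Set X)
    (h : WijsmanFStatConv f A B) : WijsmanStatConv A B := fun x ε hε =>
  hf.tendsto_div_of_tendsto_map_div (fun _ => Nat.cast_nonneg _)
    (tendsto_natCast_atTop_atTop.eventually_gt_atTop 0) (h x ε hε)

theorem wijsman_fstat_imp_stat {X : Type*} [MetricSpace X]
    (f : ℝ → ℝ) (hf : IsModulus f)
    (A : ℕ → Set X) (B : Set X)
    (hA : ∀ n, (A n).Nonempty ∧ IsClosed (A n)) (hB : B.Nonempty ∧ IsClosed B)
    (h : WijsmanFStatConv f A B) : WijsmanStatConv A B :=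
  wijsman_fstat_imp_stat_general f hf A B h
end

section
/- Let (X,d) be a metric space, θ=(k_r) a lacunary sequence, and f an unbounded modulus function that is θ-compatible. If a sequence (A_k) in CL(X) is Wijsman θ-lacunary strong Cesàro convergent to A ∈ CL(X), then (A_k) is Wijsman θ-lacunary f-strong Cesàro convergent to A. -/
/-!
Once `∑_{j ∈ I_r} |d(x, A_j) - d(x, A)| ≤ ε h_r`, monotonicity of `f` bounds the quotient by
`f(h_r ε) / f(h_r)`, whose limsup `φ_θ(ε)` is as small as we like for small `ε`.
-/

open Filter Metric Set

open Topology

namespace IsModulus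

variable {f : ℝ → ℝ} {a b : ℝ}

theorem nonneg (hf : IsModulus f) (ha : 0 ≤ a) : 0 ≤ f a := hf.1 a ha

theorem pos (hf : IsModulus f) (ha : 0 < a) : 0 < f a :=
  (hf.nonneg ha.le).lt_of_ne fun h0 => ha.ne' <| (hf.2.1 a ha.le).mp h0.symm

theorem apply_le_apply (hf : IsModulus f) (ha : 0 ≤ a) (hab : a ≤ b) : f a ≤ f b :=
  hf.2.2.2.1 ha (ha.trans hab) hab

theorem apply_div_apply_le_one (hf : IsModulus f) (ha : 0 ≤ a) (hab : a ≤ b) : f a / f b ≤ 1 :=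
  div_le_one_of_le₀ (hf.apply_le_apply ha hab) (hf.nonneg (ha.trans hab))

end IsModulus

theorem eventually_div_lt_of_modPhiTheta_lt {f : ℝ → ℝ} {k : ℕ → ℕ} {ε δ : ℝ}
    (hf : IsModulus f) (hε0 : 0 ≤ ε) (hε1 : ε ≤ 1) (hδ : modPhiTheta f k ε < δ) :
    ∀ᶠ t in atTop, f (lacH k t * ε) / f (lacH k t) < δ := by
  refine eventually_lt_of_limsup_lt hδ (isBoundedUnder_of ⟨1, fun t => ?_⟩)
  have ht : (0 : ℝ) ≤ lacH k t := Nat.cast_nonneg _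
  exact hf.apply_div_apply_le_one (mul_nonneg ht hε0) (mul_le_of_le_one_right ht hε1)

theorem ThetaCompatible.tendsto_apply_div_apply_lacH {f : ℝ → ℝ} {k : ℕ → ℕ}
    (hfc : ThetaCompatible f k) (hf : IsModulus f) (hk : ∀ᶠ r in atTop, 0 < lacH k r)
    {s : ℕ → ℝ} (hs0 : ∀ r, 0 ≤ s r) (hs : Tendsto (fun r => s r / lacH k r) atTop (𝓝 0)) :
    Tendsto (fun r => f (s r) / f (lacH k r)) atTop (𝓝 0) := by
  refine tendsto_order.2 ⟨fun a ha => Eventually.of_forall fun r =>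
    ha.trans_le (div_nonneg (hf.nonneg (hs0 r)) (hf.nonneg (Nat.cast_nonneg _))), fun δ hδ => ?_⟩
  obtain ⟨ε, hφ, hε0, hε1⟩ :=
    ((hfc.eventually (gt_mem_nhds hδ)).and (Ioo_mem_nhdsGT zero_lt_one)).exists
  filter_upwards [eventually_div_lt_of_modPhiTheta_lt hf hε0.le hε1.le hφ, hk,
    hs.eventually (gt_mem_nhds hε0)] with r hfε hr hsr
  have hr' : (0 : ℝ) < lacH k r := Nat.cast_pos.2 hr
  have hs_le : s r ≤ lacH k r * ε := by
    rw [mul_comm]; exact ((div_lt_iff₀ hr').1 hsr).le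
  calc f (s r) / f (lacH k r) ≤ f (lacH k r * ε) / f (lacH k r) :=
        div_le_div_of_nonneg_right (hf.apply_le_apply (hs0 r) hs_le) (hf.pos hr').le
    _ < δ := hfε

theorem wijsman_lac_cesaro_imp_lac_fcesaro_of_thetaCompatible_general {X : Type*}
    [MetricSpace X] (k : ℕ → ℕ) (hk : IsLacunary k)
    (f : ℝ → ℝ) (hf : IsModulus f) (hfc : ThetaCompatible f k)
    (A : ℕ → Set X) (B : Set X)
    (h : WijsmanLacStrongCesaro k A B) : WijsmanLacFStrongCesaro f k A B := fun x =>
  hfc.tendsto_apply_div_apply_lacH hf (hk.2.2.eventually_gt_atTop 0)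
    (fun _ => Finset.sum_nonneg fun _ _ => abs_nonneg _) (h x)

theorem wijsman_lac_cesaro_imp_lac_fcesaro_of_thetaCompatible {X : Type*}
    [MetricSpace X] (k : ℕ → ℕ) (hk : IsLacunary k)
    (f : ℝ → ℝ) (hf : IsModulus f) (hfc : ThetaCompatible f k)
    (A : ℕ → Set X) (B : Set X)
    (hA : ∀ n, (A n).Nonempty ∧ IsClosed (A n)) (hB : B.Nonempty ∧ IsClosed B)
    (h : WijsmanLacStrongCesaro k A B) : WijsmanLacFStrongCesaro f k A B :=
  wijsman_lac_cesaro_imp_lac_fcesaro_of_thetaCompatible_general k hk f hf hfc A B h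
end
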